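/- arXiv:1703.05319 — 3 statements merged into one kernel-verified Lean document; each statement's English description precedes it below -/
import Mathlib

section
/- If t is a real number such that η(1/2 + it) = 0, then the double partial sums S_N = ∑_{1 ≤ k < k' ≤ N} (-1)^{k+k'} · cos(t·log(k/k')) / (√k · √k') tend to -∞ as N → ∞. -/
open Filter Finset

/-- If `η(1/2 + it) = 0` (the partial sums of the eta series at `1/2 + it` tend to `0`), then
the double partial sums `∑_{1 ≤ k < k' ≤ N} (-1)^{k+k'} cos(t log(k/k'))/(√k √k')` tend
to `-∞` as `N → ∞`. -/
theorem double_sum_tendsto_atBot_of_eta_zero (t : ℝ)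
    (heta : Tendsto (fun N : ℕ => ∑ n ∈ Finset.Icc 1 N,
        (-1 : ℂ) ^ (n - 1) / (n : ℂ) ^ ((1 / 2 : ℂ) + (t : ℂ) * Complex.I))
      atTop (nhds 0)) :
    Tendsto (fun N : ℕ => ∑ p ∈ (Finset.Icc 1 N ×ˢ Finset.Icc 1 N).filter (fun p => p.1 < p.2),
        (-1 : ℝ) ^ (p.1 + p.2) * Real.cos (t * Real.log ((p.1 : ℝ) / (p.2 : ℝ))) /
          (Real.sqrt p.1 * Real.sqrt p.2))
      atTop atBot := by
  classical
  set s : ℂ := (1 / 2 : ℂ) + (t : ℂ) * Complex.I with hs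
  set g : ℕ → ℂ := fun n => (-1 : ℂ) ^ (n - 1) / (n : ℂ) ^ s with hg
  set S : ℕ → ℂ := fun N => ∑ n ∈ Finset.Icc 1 N, g n with hS
  set H : ℕ → ℝ := fun N => ∑ k ∈ Finset.Icc 1 N, 1 / (k : ℝ) with hH
  set D : ℕ → ℝ := fun N =>
      ∑ p ∈ (Finset.Icc 1 N ×ˢ Finset.Icc 1 N).filter (fun p => p.1 < p.2),
        (-1 : ℝ) ^ (p.1 + p.2) * Real.cos (t * Real.log ((p.1 : ℝ) / (p.2 : ℝ))) /
          (Real.sqrt p.1 * Real.sqrt p.2) with hD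
  -- exponential form of g
  have hgexp : ∀ k : ℕ, 1 ≤ k →
      g k = (-1 : ℂ) ^ (k - 1) * Complex.exp (-((Real.log k : ℂ) * s)) := by
    intro k hk
    have hk0 : (0 : ℝ) < k := by exact_mod_cast hk
    have hne : (k : ℂ) ≠ 0 := by
      simp only [Ne, Nat.cast_eq_zero]; omega
    have hlog : Complex.log (k : ℂ) = (Real.log k : ℂ) := by
      rw [← Complex.ofReal_natCast, ← Complex.ofReal_log hk0.le]
    simp only [hg]
    rw [Complex.cpow_def_of_ne_zero hne, div_eq_mul_inv, ← Complex.exp_neg, hlog]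
  -- the key pointwise identity
  have key : ∀ k k' : ℕ, 1 ≤ k → 1 ≤ k' →
      (g k * (starRingEnd ℂ) (g k')).re
        = (-1 : ℝ) ^ (k + k') * Real.cos (t * Real.log ((k : ℝ) / (k' : ℝ))) /
            (Real.sqrt k * Real.sqrt k') := by
    intro k k' hk hk'
    have hk0 : (0 : ℝ) < k := by exact_mod_cast hk
    have hk'0 : (0 : ℝ) < k' := by exact_mod_cast hk'
    rw [hgexp k hk, hgexp k' hk']
    rw [map_mul, map_pow, ← Complex.exp_conj]
    have c1 : (starRingEnd ℂ) (-1 : ℂ) = -1 := by simp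
    rw [c1]
    have cexp : (starRingEnd ℂ) (-((Real.log k' : ℂ) * s)) = -((Real.log k' : ℂ) * ((1/2 : ℂ) - (t : ℂ) * Complex.I)) := by
      rw [hs]
      simp only [map_neg, map_mul, map_add, map_div₀, map_one, map_ofNat,
        Complex.conj_ofReal, Complex.conj_I]
      ring
    rw [cexp]
    have hexpadd : (-((Real.log k : ℂ) * s)) + (-((Real.log k' : ℂ) * ((1/2 : ℂ) - (t : ℂ) * Complex.I)))
        = ((-((Real.log k : ℝ) + Real.log k') / 2 : ℝ) : ℂ) +
            ((t * (Real.log k' - Real.log k) : ℝ) : ℂ) * Complex.I := by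
      rw [hs]; push_cast; ring
    have hrearr : (-1 : ℂ) ^ (k - 1) * Complex.exp (-((Real.log k : ℂ) * s)) *
        ((-1 : ℂ) ^ (k' - 1) * Complex.exp (-((Real.log k' : ℂ) * ((1/2 : ℂ) - (t : ℂ) * Complex.I))))
        = (-1 : ℂ) ^ ((k - 1) + (k' - 1)) *
            Complex.exp ((-((Real.log k : ℝ) + Real.log k') / 2 : ℝ) +
              (t * (Real.log k' - Real.log k) : ℝ) * Complex.I) := by
      calc (-1 : ℂ) ^ (k - 1) * Complex.exp (-((Real.log k : ℂ) * s)) *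
          ((-1 : ℂ) ^ (k' - 1) * Complex.exp (-((Real.log k' : ℂ) * ((1/2 : ℂ) - (t : ℂ) * Complex.I))))
          = (-1 : ℂ) ^ ((k - 1) + (k' - 1)) *
            (Complex.exp (-((Real.log k : ℂ) * s)) *
              Complex.exp (-((Real.log k' : ℂ) * ((1/2 : ℂ) - (t : ℂ) * Complex.I)))) := by
            rw [pow_add]; ring
        _ = _ := by rw [← Complex.exp_add, hexpadd]
    rw [hrearr]
    have hpow : (-1 : ℂ) ^ ((k - 1) + (k' - 1)) = (((-1 : ℝ) ^ (k + k') : ℝ) : ℂ) := by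
      have : k + k' = (k - 1) + (k' - 1) + 2 := by omega
      rw [this]
      push_cast
      ring
    rw [hpow, Complex.re_ofReal_mul]
    have hre : (Complex.exp ((-((Real.log k : ℝ) + Real.log k') / 2 : ℝ) +
        (t * (Real.log k' - Real.log k) : ℝ) * Complex.I)).re
        = Real.exp (-((Real.log k : ℝ) + Real.log k') / 2) *
            Real.cos (t * (Real.log k' - Real.log k)) := by
      rw [Complex.exp_re]
      simp only [Complex.add_re, Complex.ofReal_re, Complex.mul_re, Complex.I_re,
        Complex.I_im, Complex.ofReal_im, Complex.add_im, Complex.mul_im]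
      ring_nf
    rw [hre]
    have hcos : Real.cos (t * (Real.log k' - Real.log k))
        = Real.cos (t * Real.log ((k : ℝ) / (k' : ℝ))) := by
      rw [Real.log_div hk0.ne' hk'0.ne']
      rw [show t * (Real.log k' - Real.log k) = -(t * (Real.log k - Real.log k')) by ring]
      exact Real.cos_neg _
    have hexp : Real.exp (-((Real.log k : ℝ) + Real.log k') / 2)
        = 1 / (Real.sqrt k * Real.sqrt k') := by
      rw [show -((Real.log k : ℝ) + Real.log k') / 2
          = (-(1/2) * Real.log k) + (-(1/2) * Real.log k') by ring,
        Real.exp_add]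
      have h1 : ∀ x : ℝ, 0 < x → Real.exp (-(1/2) * Real.log x) = 1 / Real.sqrt x := by
        intro x hx
        rw [Real.sqrt_eq_rpow, Real.rpow_def_of_pos hx,
          show -(1/2 : ℝ) * Real.log x = -(Real.log x * (1/2)) by ring,
          Real.exp_neg, inv_eq_one_div]
      rw [h1 _ hk0, h1 _ hk'0]
      rw [div_mul_div_comm, one_mul]
    rw [hexp, hcos]
    ring
  -- diagonal terms
  have diag : ∀ k : ℕ, 1 ≤ k → (g k * (starRingEnd ℂ) (g k)).re = 1 / (k : ℝ) := by
    intro k hk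
    have hk0 : (0 : ℝ) < k := by exact_mod_cast hk
    rw [key k k hk hk]
    rw [div_self hk0.ne', Real.log_one, mul_zero, Real.cos_zero,
      Real.mul_self_sqrt hk0.le]
    have : (-1 : ℝ) ^ (k + k) = 1 := by
      rw [← two_mul, pow_mul]; norm_num
    rw [this]; ring
  -- expansion of ‖S N‖²
  have expand : ∀ N : ℕ, ‖S N‖ ^ 2 = H N + 2 * D N := by
    intro N
    have h1 : ‖S N‖ ^ 2 = (S N * (starRingEnd ℂ) (S N)).re := by
      rw [Complex.mul_conj]
      simp [Complex.sq_norm]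
    have h2 : S N * (starRingEnd ℂ) (S N)
        = ∑ p ∈ Finset.Icc 1 N ×ˢ Finset.Icc 1 N, g p.1 * (starRingEnd ℂ) (g p.2) := by
      rw [hS]
      simp only
      rw [map_sum, Finset.sum_mul_sum, ← Finset.sum_product']
    rw [h1, h2, Complex.re_sum]
    set A := Finset.Icc 1 N with hA
    set F : ℕ × ℕ → ℝ := fun p => (g p.1 * (starRingEnd ℂ) (g p.2)).re with hF
    have Fsymm : ∀ p : ℕ × ℕ, F p.swap = F p := by
      intro p
      have : g p.2 * (starRingEnd ℂ) (g p.1)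
          = (starRingEnd ℂ) (g p.1 * (starRingEnd ℂ) (g p.2)) := by
        rw [map_mul, Complex.conj_conj]; ring
      simp only [hF, Prod.fst_swap, Prod.snd_swap, this, Complex.conj_re]
    have split1 : ∑ p ∈ A ×ˢ A, F p
        = (∑ p ∈ (A ×ˢ A).filter (fun p => p.1 < p.2), F p)
          + ∑ p ∈ (A ×ˢ A).filter (fun p => ¬ p.1 < p.2), F p :=
      (Finset.sum_filter_add_sum_filter_not _ _ _).symm
    have split2 : ∑ p ∈ (A ×ˢ A).filter (fun p => ¬ p.1 < p.2), F p
        = (∑ p ∈ (A ×ˢ A).filter (fun p => p.2 < p.1), F p)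
          + ∑ p ∈ (A ×ˢ A).filter (fun p => p.1 = p.2), F p := by
      rw [← Finset.sum_filter_add_sum_filter_not ((A ×ˢ A).filter (fun p => ¬ p.1 < p.2))
        (fun p => p.2 < p.1)]
      congr 1
      · congr 1
        rw [Finset.filter_filter]
        apply Finset.filter_congr
        intro p _
        omega
      · congr 1
        rw [Finset.filter_filter]
        apply Finset.filter_congr
        intro p _
        omega
    have hswap : ∑ p ∈ (A ×ˢ A).filter (fun p => p.2 < p.1), F p
        = ∑ p ∈ (A ×ˢ A).filter (fun p => p.1 < p.2), F p := by
      apply Finset.sum_nbij' (i := Prod.swap) (j := Prod.swap)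
      · intro p hp
        simp only [Finset.mem_filter, Finset.mem_product] at hp ⊢
        exact ⟨⟨hp.1.2, hp.1.1⟩, hp.2⟩
      · intro p hp
        simp only [Finset.mem_filter, Finset.mem_product] at hp ⊢
        exact ⟨⟨hp.1.2, hp.1.1⟩, hp.2⟩
      · intro p _; exact Prod.swap_swap p
      · intro p _; exact Prod.swap_swap p
      · intro p _; exact (Fsymm p).symm
    have hdiagsum : ∑ p ∈ (A ×ˢ A).filter (fun p => p.1 = p.2), F p
        = ∑ k ∈ A, 1 / (k : ℝ) := by
      rw [Finset.sum_nbij' (i := fun p : ℕ × ℕ => p.1) (j := fun k : ℕ => (k, k))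
        (t := A) (g := fun k => 1 / (k : ℝ))]
      · intro p hp
        simp only [Finset.mem_filter, Finset.mem_product] at hp
        exact hp.1.1
      · intro k hk
        simp only [Finset.mem_filter, Finset.mem_product]
        exact ⟨⟨hk, hk⟩, trivial⟩
      · intro p hp
        simp only [Finset.mem_filter, Finset.mem_product] at hp
        exact Prod.ext rfl hp.2
      · intro k _; rfl
      · intro p hp
        simp only [Finset.mem_filter, Finset.mem_product, Finset.mem_Icc, hA] at hp
        have : F p = F (p.1, p.1) := by rw [hF]; simp only; rw [← hp.2]
        rw [this]
        exact diag p.1 hp.1.1.1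
    have hDN : D N = ∑ p ∈ (A ×ˢ A).filter (fun p => p.1 < p.2), F p := by
      rw [hD]
      apply Finset.sum_congr rfl
      intro p hp
      simp only [Finset.mem_filter, Finset.mem_product, Finset.mem_Icc, hA] at hp
      exact (key p.1 p.2 hp.1.1.1 hp.1.2.1).symm
    calc ∑ p ∈ A ×ˢ A, F p
        = (∑ p ∈ (A ×ˢ A).filter (fun p => p.1 < p.2), F p)
          + ((∑ p ∈ (A ×ˢ A).filter (fun p => p.2 < p.1), F p)
            + ∑ p ∈ (A ×ˢ A).filter (fun p => p.1 = p.2), F p) := by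
          rw [split1, split2]
      _ = H N + 2 * D N := by
          rw [hswap, hdiagsum, hDN, hH]
          ring
  -- limits
  have hSnorm : Tendsto (fun N => ‖S N‖ ^ 2) atTop (nhds 0) := by
    have : Tendsto (fun N => ‖S N‖) atTop (nhds ‖(0 : ℂ)‖) := heta.norm
    simpa using this.pow 2
  have hHtop : Tendsto H atTop atTop := by
    have hconv : ∀ N : ℕ, H N = ∑ i ∈ Finset.range N, 1 / ((i : ℝ) + 1) := by
      intro N
      rw [hH]
      simp only
      rw [show Finset.Icc 1 N = Finset.Ico 1 (N + 1) by rfl, Finset.sum_Ico_eq_sum_range]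
      simp only [Nat.add_sub_cancel]
      apply Finset.sum_congr rfl
      intro i _
      push_cast
      ring_nf
    rw [funext hconv]
    exact Real.tendsto_sum_range_one_div_nat_succ_atTop
  -- conclusion
  have hDeq : ∀ N, D N = (‖S N‖ ^ 2 - H N) / 2 := by
    intro N
    have := expand N
    linarith
  rw [show D = fun N => (‖S N‖ ^ 2 - H N) / 2 from funext hDeq]
  apply Tendsto.atBot_div_const (by norm_num : (0:ℝ) < 2)
  have hneg : Tendsto (fun N => -H N) atTop atBot := tendsto_neg_atTop_atBot.comp hHtop
  simpa [sub_eq_add_neg] using hSnorm.add_atBot hneg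
end

section
/- If σ and t are real numbers with 0 < σ < 1/2 such that η(σ + it) = 0, then the double partial sums S_N = ∑_{1 ≤ k < k' ≤ N} (-1)^{k+k'} · cos(t·log(k/k')) / (k^σ · k'^σ) tend to -∞ as N → ∞. -/
/-! With `a_k = (-1)^(k-1) k^{-s}`, expanding `‖η_N(s)‖² = ∑_{k,k' ≤ N} Re(conj a_k · a_k')` and
pairing `(k, k')` with `(k', k)` gives `‖η_N(s)‖² = ∑_{k ≤ N} k^{-2σ} + 2 S_N`. The left side
tends to `‖η(s)‖² = 0`, while the diagonal sum diverges since `2σ < 1`; hence `S_N → -∞`. -/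

open Filter Finset Complex ComplexConjugate

theorem Finset.sum_product_self_eq_sum_diag_add_two_mul_sum_lt {ι R : Type*} [LinearOrder ι]
    [NonAssocSemiring R] (s : Finset ι) (f : ι × ι → R) (hf : ∀ p, f p.swap = f p) :
    ∑ p ∈ s ×ˢ s, f p = ∑ i ∈ s, f (i, i) + 2 * ∑ p ∈ s ×ˢ s with p.1 < p.2, f p := by
  have hgt : ∑ p ∈ s ×ˢ s with p.2 < p.1, f p = ∑ p ∈ s ×ˢ s with p.1 < p.2, f p :=
    sum_nbij' Prod.swap Prod.swap (by simp +contextual) (by simp +contextual)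
      (fun _ _ => rfl) (fun _ _ => rfl) (fun p _ => (hf p).symm)
  have hdiag : ∑ p ∈ s ×ˢ s with p.1 = p.2, f p = ∑ i ∈ s, f (i, i) := by
    rw [sum_filter, sum_product]
    exact sum_congr rfl fun i hi => by simp [hi]
  have hsplit : ∑ p ∈ s ×ˢ s, f p = ∑ p ∈ s ×ˢ s with p.1 < p.2, f p +
      ∑ p ∈ s ×ˢ s with p.1 = p.2, f p + ∑ p ∈ s ×ˢ s with p.2 < p.1, f p := by
    simp only [sum_filter, ← sum_add_distrib]
    refine sum_congr rfl fun p _ => ?_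
    rcases lt_trichotomy p.1 p.2 with h | h | h
    · simp [h, h.ne, h.not_gt]
    · simp [h]
    · simp [h, h.ne', h.not_gt]
  rw [hsplit, hdiag, hgt, two_mul]
  abel

open RCLike in
theorem norm_sum_sq_eq_sum_norm_sq_add_two_mul_sum_re_inner {ι 𝕜 E : Type*} [LinearOrder ι]
    [RCLike 𝕜] [NormedAddCommGroup E] [InnerProductSpace 𝕜 E] (s : Finset ι) (x : ι → E) :
    ‖∑ i ∈ s, x i‖ ^ 2 =
      ∑ i ∈ s, ‖x i‖ ^ 2 + 2 * ∑ p ∈ s ×ˢ s with p.1 < p.2, re (inner 𝕜 (x p.1) (x p.2)) := by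
  rw [@norm_sq_eq_re_inner 𝕜, sum_inner, map_sum]
  simp_rw [inner_sum, map_sum]
  rw [← sum_product' (f := fun i j => re (inner 𝕜 (x i) (x j))),
    sum_product_self_eq_sum_diag_add_two_mul_sum_lt _ (fun p => re (inner 𝕜 (x p.1) (x p.2)))
      (fun p => inner_re_symm _ _)]
  simp_rw [← @norm_sq_eq_re_inner 𝕜]

lemma tendsto_sum_Icc_one_atTop_of_not_summable {f : ℕ → ℝ} (hf : ∀ n, 0 ≤ f n)
    (h : ¬Summable f) : Tendsto (fun N => ∑ k ∈ Icc 1 N, f k) atTop atTop := by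
  have hshift : ¬Summable (fun n => f (n + 1)) := by rwa [summable_nat_add_iff 1]
  refine ((not_summable_iff_tendsto_nat_atTop_of_nonneg fun n => hf _).1 hshift).congr fun N => ?_
  rw [← Ico_add_one_right_eq_Icc, sum_Ico_eq_sum_range, Nat.add_sub_cancel]
  simp_rw [add_comm 1]

lemma tendsto_sum_Icc_one_div_rpow_atTop {p : ℝ} (hp : p ≤ 1) :
    Tendsto (fun N : ℕ => ∑ k ∈ Icc 1 N, 1 / (k : ℝ) ^ p) atTop atTop :=
  tendsto_sum_Icc_one_atTop_of_not_summable (fun _ => by positivity)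
    (by rw [Real.summable_one_div_nat_rpow]; exact hp.not_gt)

lemma re_conj_cpow_inv_mul_cpow_inv {x y : ℝ} (hx : 0 < x) (hy : 0 < y) (σ t : ℝ) :
    (conj ((x : ℂ) ^ (σ + t * I))⁻¹ * ((y : ℂ) ^ (σ + t * I))⁻¹).re =
      Real.cos (t * Real.log (x / y)) / (x ^ σ * y ^ σ) := by
  rw [cpow_def_of_ne_zero (ofReal_ne_zero.2 hx.ne'), cpow_def_of_ne_zero (ofReal_ne_zero.2 hy.ne'),
    ← exp_neg, ← exp_neg, ← exp_conj, ← exp_add, exp_re, ← ofReal_log hx.le, ← ofReal_log hy.le,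
    Real.log_div hx.ne' hy.ne', Real.rpow_def_of_pos hx, Real.rpow_def_of_pos hy, ← Real.exp_add]
  simp only [map_neg, map_mul, conj_ofReal, map_add, conj_I, mul_neg, add_re, neg_re, mul_re,
    ofReal_re, I_re, mul_zero, ofReal_im, I_im, mul_one, sub_self, neg_zero, add_zero, add_im,
    neg_im, mul_im, zero_add, zero_mul, sub_zero, neg_neg]
  rw [← neg_add, Real.exp_neg,
    show Real.log x * t + -(Real.log y * t) = t * (Real.log x - Real.log y) by ring]
  ring

lemma sq_norm_neg_one_pow_div_natCast_cpow {n : ℕ} (hn : 0 < n) (s : ℂ) :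
    ‖(-1 : ℂ) ^ (n - 1) / (n : ℂ) ^ s‖ ^ 2 = 1 / (n : ℝ) ^ (2 * s.re) := by
  rw [norm_div, norm_pow, norm_neg, norm_one, one_pow, norm_natCast_cpow_of_pos hn, div_pow,
    one_pow, mul_comm, ← Real.rpow_mul_natCast (Nat.cast_nonneg n)]
  norm_num

lemma re_inner_neg_one_pow_div_natCast_cpow {k j : ℕ} (hk : 0 < k) (hj : 0 < j) (σ t : ℝ) :
    RCLike.re (inner ℂ ((-1 : ℂ) ^ (k - 1) / (k : ℂ) ^ (σ + t * I))
      ((-1 : ℂ) ^ (j - 1) / (j : ℂ) ^ (σ + t * I))) =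
      (-1 : ℝ) ^ (k + j) * Real.cos (t * Real.log (k / j)) / ((k : ℝ) ^ σ * (j : ℝ) ^ σ) := by
  have hsign : conj ((-1 : ℂ) ^ (k - 1)) * (-1) ^ (j - 1) = ((-1 : ℝ) ^ (k + j) : ℝ) := by
    obtain ⟨k, rfl⟩ := Nat.exists_eq_add_of_lt hk
    obtain ⟨j, rfl⟩ := Nat.exists_eq_add_of_lt hj
    simp [pow_add]
  rw [RCLike.inner_apply', div_eq_mul_inv, div_eq_mul_inv, map_mul (starRingEnd ℂ),
    mul_mul_mul_comm, hsign, RCLike.re_to_complex, re_ofReal_mul, ← ofReal_natCast,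
    ← ofReal_natCast, re_conj_cpow_inv_mul_cpow_inv (Nat.cast_pos.2 hk) (Nat.cast_pos.2 hj), mul_div_assoc]

theorem double_sum_tendsto_atBot_of_eta_zero_left_general (σ t : ℝ) (h1 : σ < 1 / 2)
    (heta : Tendsto (fun N : ℕ => ∑ n ∈ Finset.Icc 1 N,
        (-1 : ℂ) ^ (n - 1) / (n : ℂ) ^ ((σ : ℂ) + (t : ℂ) * Complex.I))
      atTop (nhds 0)) :
    Tendsto (fun N : ℕ => ∑ p ∈ (Finset.Icc 1 N ×ˢ Finset.Icc 1 N).filter (fun p => p.1 < p.2),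
        (-1 : ℝ) ^ (p.1 + p.2) * Real.cos (t * Real.log ((p.1 : ℝ) / (p.2 : ℝ))) /
          ((p.1 : ℝ) ^ σ * (p.2 : ℝ) ^ σ))
      atTop atBot := by
  set z : ℕ → ℂ := fun n => (-1 : ℂ) ^ (n - 1) / (n : ℂ) ^ ((σ : ℂ) + (t : ℂ) * Complex.I)
  have hsplit : ∀ N, ‖∑ n ∈ Icc 1 N, z n‖ ^ 2 = ∑ n ∈ Icc 1 N, 1 / (n : ℝ) ^ (2 * σ) +
      2 * ∑ p ∈ (Icc 1 N ×ˢ Icc 1 N).filter (fun p => p.1 < p.2),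
        (-1 : ℝ) ^ (p.1 + p.2) * Real.cos (t * Real.log ((p.1 : ℝ) / (p.2 : ℝ))) /
          ((p.1 : ℝ) ^ σ * (p.2 : ℝ) ^ σ) := fun N => by
    rw [norm_sum_sq_eq_sum_norm_sq_add_two_mul_sum_re_inner (𝕜 := ℂ)]
    congr 1
    · refine sum_congr rfl fun n hn => ?_
      rw [sq_norm_neg_one_pow_div_natCast_cpow (mem_Icc.1 hn).1]
      simp
    · refine congrArg (2 * ·) (sum_congr rfl fun p hp => ?_)
      simp only [mem_filter, mem_product, mem_Icc] at hp
      exact re_inner_neg_one_pow_div_natCast_cpow hp.1.1.1 hp.1.2.1 σ t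
  have hnorm : Tendsto (fun N => ‖∑ n ∈ Icc 1 N, z n‖ ^ 2) atTop (nhds 0) := by
    simpa using heta.norm.pow 2
  have hdiverge := tendsto_sum_Icc_one_div_rpow_atTop (p := 2 * σ) (by linarith)
  refine ((hnorm.add_atBot (tendsto_neg_atTop_atBot.comp hdiverge)).atBot_div_const two_pos).congr
    fun N => ?_
  simp only [Function.comp_apply, hsplit N]
  ring

/-- If `0 < σ < 1/2` and `η(σ + it) = 0` (the partial sums of the eta series at `σ + it` tend
to `0`), then the double partial sums
`∑_{1 ≤ k < k' ≤ N} (-1)^{k+k'} cos(t log(k/k'))/(k^σ k'^σ)` tend to `-∞` as `N → ∞`. -/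
theorem double_sum_tendsto_atBot_of_eta_zero_left (σ t : ℝ) (h0 : 0 < σ) (h1 : σ < 1 / 2)
    (heta : Tendsto (fun N : ℕ => ∑ n ∈ Finset.Icc 1 N,
        (-1 : ℂ) ^ (n - 1) / (n : ℂ) ^ ((σ : ℂ) + (t : ℂ) * Complex.I))
      atTop (nhds 0)) :
    Tendsto (fun N : ℕ => ∑ p ∈ (Finset.Icc 1 N ×ˢ Finset.Icc 1 N).filter (fun p => p.1 < p.2),
        (-1 : ℝ) ^ (p.1 + p.2) * Real.cos (t * Real.log ((p.1 : ℝ) / (p.2 : ℝ))) /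
          ((p.1 : ℝ) ^ σ * (p.2 : ℝ) ^ σ))
      atTop atBot :=
  double_sum_tendsto_atBot_of_eta_zero_left_general σ t h1 heta
end

section
/- If σ' and t are real numbers with 1/2 < σ' < 1 such that η(σ' + it) = 0, then the double partial sums S_N = ∑_{1 ≤ k < k' ≤ N} (-1)^{k+k'} · cos(t·log(k/k')) / (k^{σ'} · k'^{σ'}) converge as N → ∞ to -C(σ')/2, where C(σ') = ∑_{k=1}^∞ 1/k^{2σ'} is the (finite) value of the convergent series. -/
/-!
Writing `a n = (-1)^(n-1) n^(-s)` with `s = σ' + i t`, expanding `|∑_{n ≤ N} a n|²` gives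
`∑_{n ≤ N} |a n|² + 2 ∑_{k < k'} Re (a k * conj (a k'))`, and `Re (a k * conj (a k'))` is exactly
the summand of `S_N`. As `N → ∞` the left side tends to `|η(s)|² = 0` and the diagonal sum to
`C(σ')` (since `2σ' > 1`), so `S_N → -C(σ')/2`.
-/

open Filter Finset ComplexConjugate Topology

theorem Finset.sum_product_self_of_symm {ι M : Type*} [LinearOrder ι] [AddCommMonoid M]
    (s : Finset ι) (F : ι × ι → M) (hF : ∀ i j, F (i, j) = F (j, i)) :
    ∑ p ∈ s ×ˢ s, F p = ∑ i ∈ s, F (i, i) + 2 • ∑ p ∈ s ×ˢ s with p.1 < p.2, F p := by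
  have hdiag : ∑ p ∈ s ×ˢ s with p.1 = p.2, F p = ∑ i ∈ s, F (i, i) := by
    rw [← diag_eq_filter, sum_diag]
  have hswap : ∑ p ∈ s ×ˢ s with p.2 < p.1, F p = ∑ p ∈ s ×ˢ s with p.1 < p.2, F p :=
    sum_nbij' Prod.swap Prod.swap (by simp +contextual) (by simp +contextual) (by simp) (by simp)
      (fun p _ => hF p.1 p.2)
  rw [← sum_filter_add_sum_filter_not _ (fun p => p.1 = p.2), hdiag, two_nsmul]
  nth_rewrite 2 [← hswap]
  rw [← sum_filter_add_sum_filter_not (filter _ _) (fun p => p.1 < p.2), filter_filter,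
    filter_filter]
  congr 2 <;> exact sum_congr (filter_congr fun p _ => by grind) fun _ _ => rfl

theorem Complex.normSq_sum {ι : Type*} [LinearOrder ι] (s : Finset ι) (f : ι → ℂ) :
    Complex.normSq (∑ i ∈ s, f i) =
      ∑ i ∈ s, Complex.normSq (f i) +
        2 * ∑ p ∈ s ×ˢ s with p.1 < p.2, (f p.1 * conj (f p.2)).re := by
  have h := sum_product_self_of_symm s (fun p => (f p.1 * conj (f p.2)).re) fun i j => by
    simp only [Complex.mul_re, Complex.conj_re, Complex.conj_im]; ring
  simp only [Complex.mul_conj, Complex.ofReal_re, nsmul_eq_mul, Nat.cast_ofNat] at h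
  rw [← h, sum_product, ← Complex.ofReal_re (normSq _), ← Complex.mul_conj, map_sum, sum_mul_sum,
    Complex.re_sum]
  simp only [Complex.re_sum]

theorem Complex.ofReal_cpow_eq_rpow_mul_exp {x : ℝ} (hx : 0 < x) (σ t : ℝ) :
    (x : ℂ) ^ ((σ : ℂ) + t * I) = ↑(x ^ σ) * exp (↑(t * Real.log x) * I) := by
  have hx' : (x : ℂ) ≠ 0 := ofReal_ne_zero.2 hx.ne'
  rw [cpow_add _ _ hx', ofReal_cpow hx.le, cpow_def_of_ne_zero hx' (t * I), ← ofReal_log hx.le]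
  push_cast
  ring_nf

theorem Complex.re_inv_cpow_mul_conj_inv_cpow {x y : ℝ} (hx : 0 < x) (hy : 0 < y) (σ t : ℝ) :
    (((x : ℂ) ^ ((σ : ℂ) + t * I))⁻¹ * conj (((y : ℂ) ^ ((σ : ℂ) + t * I))⁻¹)).re =
      Real.cos (t * Real.log (x / y)) / (x ^ σ * y ^ σ) := by
  rw [ofReal_cpow_eq_rpow_mul_exp hx, ofReal_cpow_eq_rpow_mul_exp hy, mul_inv, mul_inv, map_mul,
    ← exp_neg, ← exp_neg, ← exp_conj, map_inv₀, conj_ofReal, map_neg, map_mul, conj_ofReal,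
    conj_I, mul_mul_mul_comm, ← exp_add, ← mul_inv, ← ofReal_mul, ← ofReal_inv,
    Real.log_div hx.ne' hy.ne']
  rw [show -(↑(t * Real.log x) * I) + -(↑(t * Real.log y) * -I) =
      ↑(-(t * (Real.log x - Real.log y))) * I by push_cast; ring,
    re_ofReal_mul, exp_ofReal_mul_I_re, Real.cos_neg, inv_mul_eq_div]

theorem tendsto_sum_Icc_one_div_rpow {p : ℝ} (hp : 1 < p) :
    Tendsto (fun N : ℕ => ∑ k ∈ Icc 1 N, 1 / (k : ℝ) ^ p) atTop
      (𝓝 (∑' k : ℕ, 1 / ((k : ℝ) + 1) ^ p)) := by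
  have hs : Summable fun k : ℕ => 1 / ((k : ℝ) + 1) ^ p :=
    ((Real.summable_one_div_nat_add_rpow 1 p).2 hp).congr fun k => by
      rw [abs_of_pos (by positivity)]
  refine hs.hasSum.tendsto_sum_nat.congr fun N => ?_
  rw [← Ico_add_one_right_eq_Icc, sum_Ico_eq_sum_range]
  simp [add_comm]

noncomputable def etaTerm (s : ℂ) (n : ℕ) : ℂ := (-1) ^ (n - 1) / (n : ℂ) ^ s

theorem normSq_etaTerm (s : ℂ) {n : ℕ} (hn : 0 < n) :
    Complex.normSq (etaTerm s n) = 1 / (n : ℝ) ^ (2 * s.re) := by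
  rw [Complex.normSq_eq_norm_sq, etaTerm, norm_div, norm_pow, norm_neg, norm_one, one_pow,
    Complex.norm_natCast_cpow_of_pos hn, div_pow, one_pow, ← Real.rpow_natCast,
    ← Real.rpow_mul n.cast_nonneg, mul_comm, Nat.cast_ofNat]

theorem re_etaTerm_mul_conj_etaTerm (σ t : ℝ) {k k' : ℕ} (hk : 0 < k) (hk' : 0 < k') :
    (etaTerm (σ + t * Complex.I) k * conj (etaTerm (σ + t * Complex.I) k')).re =
      (-1) ^ (k + k') * Real.cos (t * Real.log (k / k')) / ((k : ℝ) ^ σ * (k' : ℝ) ^ σ) := by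
  have hterm : ∀ n : ℕ, etaTerm (σ + t * Complex.I) n =
      (((-1 : ℝ) ^ (n - 1) : ℝ) : ℂ) * ((n : ℝ) ^ ((σ : ℂ) + t * Complex.I) : ℂ)⁻¹ := fun n => by
    simp [etaTerm, div_eq_mul_inv]
  rw [hterm, hterm, map_mul, Complex.conj_ofReal, mul_mul_mul_comm, ← Complex.ofReal_mul,
    Complex.re_ofReal_mul, Complex.re_inv_cpow_mul_conj_inv_cpow (by positivity) (by positivity),
    mul_div_assoc]
  congr 1
  obtain ⟨a, rfl⟩ := Nat.exists_eq_add_one.2 hk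
  obtain ⟨b, rfl⟩ := Nat.exists_eq_add_one.2 hk'
  simp only [Nat.add_sub_cancel]
  ring

theorem normSq_sum_etaTerm (σ t : ℝ) (N : ℕ) :
    Complex.normSq (∑ n ∈ Icc 1 N, etaTerm (σ + t * Complex.I) n) =
      ∑ n ∈ Icc 1 N, 1 / (n : ℝ) ^ (2 * σ) + 2 * ∑ p ∈ Icc 1 N ×ˢ Icc 1 N with p.1 < p.2,
        (-1) ^ (p.1 + p.2) * Real.cos (t * Real.log (p.1 / p.2)) /
          ((p.1 : ℝ) ^ σ * (p.2 : ℝ) ^ σ) := by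
  rw [Complex.normSq_sum]
  congr 1
  · refine sum_congr rfl fun n hn => ?_
    rw [normSq_etaTerm _ (mem_Icc.1 hn).1, Complex.add_re, Complex.ofReal_re,
      Complex.re_ofReal_mul, Complex.I_re, mul_zero, add_zero]
  · refine congrArg (2 * ·) (sum_congr rfl fun p hp => ?_)
    simp only [mem_filter, mem_product, mem_Icc] at hp
    exact re_etaTerm_mul_conj_etaTerm σ t hp.1.1.1 hp.1.2.1

theorem double_sum_tendsto_of_eta_zero_right_general (σ' t : ℝ) (h0 : 1 / 2 < σ')
    (heta : Tendsto (fun N : ℕ => ∑ n ∈ Finset.Icc 1 N,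
        (-1 : ℂ) ^ (n - 1) / (n : ℂ) ^ ((σ' : ℂ) + (t : ℂ) * Complex.I))
      atTop (nhds 0)) :
    Tendsto (fun N : ℕ => ∑ p ∈ (Finset.Icc 1 N ×ˢ Finset.Icc 1 N).filter (fun p => p.1 < p.2),
        (-1 : ℝ) ^ (p.1 + p.2) * Real.cos (t * Real.log ((p.1 : ℝ) / (p.2 : ℝ))) /
          ((p.1 : ℝ) ^ σ' * (p.2 : ℝ) ^ σ'))
      atTop (nhds (-(∑' k : ℕ, 1 / ((k : ℝ) + 1) ^ (2 * σ')) / 2)) := by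
  have hnormSq : Tendsto (fun N => Complex.normSq (∑ n ∈ Icc 1 N, etaTerm (σ' + t * Complex.I) n))
      atTop (𝓝 0) :=
    (Complex.continuous_normSq.tendsto' 0 0 (map_zero _)).comp heta
  have hdiag := tendsto_sum_Icc_one_div_rpow (p := 2 * σ') (by linarith)
  have h := (hnormSq.sub hdiag).div_const 2
  rw [zero_sub] at h
  refine h.congr fun N => ?_
  rw [normSq_sum_etaTerm, add_sub_cancel_left, mul_div_cancel_left₀ _ two_ne_zero]

/-- If `1/2 < σ' < 1` and `η(σ' + it) = 0` (the partial sums of the eta series at `σ' + it`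
tend to `0`), then the double partial sums
`∑_{1 ≤ k < k' ≤ N} (-1)^{k+k'} cos(t log(k/k'))/(k^{σ'} k'^{σ'})` converge to `-C(σ')/2`,
where `C(σ') = ∑_{k=1}^∞ 1/k^{2σ'}`. -/
theorem double_sum_tendsto_of_eta_zero_right (σ' t : ℝ) (h0 : 1 / 2 < σ') (h1 : σ' < 1)
    (heta : Tendsto (fun N : ℕ => ∑ n ∈ Finset.Icc 1 N,
        (-1 : ℂ) ^ (n - 1) / (n : ℂ) ^ ((σ' : ℂ) + (t : ℂ) * Complex.I))
      atTop (nhds 0)) :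
    Tendsto (fun N : ℕ => ∑ p ∈ (Finset.Icc 1 N ×ˢ Finset.Icc 1 N).filter (fun p => p.1 < p.2),
        (-1 : ℝ) ^ (p.1 + p.2) * Real.cos (t * Real.log ((p.1 : ℝ) / (p.2 : ℝ))) /
          ((p.1 : ℝ) ^ σ' * (p.2 : ℝ) ^ σ'))
      atTop (nhds (-(∑' k : ℕ, 1 / ((k : ℝ) + 1) ^ (2 * σ')) / 2)) :=
  double_sum_tendsto_of_eta_zero_right_general σ' t h0 heta
end
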